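/- arXiv:1903.07723 — 6 statements merged into one kernel-verified Lean document; each statement's English description precedes it below -/
import Mathlib

section
/- Let K := {x ∈ ℝⁿ : g_j(x) ≤ 0, j = 1,…,m} be closed, where each g_j : ℝⁿ → ℝ is tangentially convex at x̄. Let C be a nonempty closed convex subset of ℝⁿ with C ∩ K ≠ ∅, let K̃ := C ∩ K, and let x̄ ∈ K̃. If K is nearly convex at x̄, then the contingent cone T_{K̃}(x̄) is contained in the linearized tangential cone D(x̄). -/
open Filter Set Pointwise
open scoped Topology RealInnerProductSpace

noncomputable section

variable {E : Type*} [NormedAddCommGroup E] [InnerProductSpace ℝ E]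

/-- Directional derivative of `f` at `x` in direction `v`, as the limit of difference
quotients as `α → 0⁺` (defined via `limUnder`; meaningful when the limit exists). -/
noncomputable def dirDeriv (f : E → ℝ) (x v : E) : ℝ :=
  limUnder (𝓝[>] (0:ℝ)) (fun α : ℝ => (f (x + α • v) - f x) / α)

/-- `f` is tangentially convex at `x`: the directional derivative exists (and is finite)
in every direction, and `v ↦ f'(x, v)` is convex. -/
def TangentiallyConvexAt (f : E → ℝ) (x : E) : Prop :=
  (∀ v : E, Tendsto (fun α : ℝ => (f (x + α • v) - f x) / α) (𝓝[>] (0:ℝ))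
      (𝓝 (dirDeriv f x v)))
  ∧ ConvexOn ℝ Set.univ (dirDeriv f x)

/-- The tangential subdifferential `∂_T f (x)`. -/
def tangSubdiff (f : E → ℝ) (x : E) : Set E :=
  {p : E | ∀ v : E, ⟪p, v⟫ ≤ dirDeriv f x v}

/-- The polar cone `(W - x)°`. -/
def polarOf (W : Set E) (x : E) : Set E :=
  {l : E | ∀ y ∈ W, ⟪l, y - x⟫ ≤ 0}

/-- The contingent (Bouligand tangent) cone of `U` at `x`. -/
def contingentCone (U : Set E) (x : E) : Set E :=
  {v : E | ∃ (a : ℕ → ℝ) (w : ℕ → E), (∀ k, 0 < a k) ∧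
    Tendsto a atTop (𝓝 0) ∧ Tendsto w atTop (𝓝 v) ∧ ∀ k, x + a k • w k ∈ U}

/-- `V` is nearly convex at `x ∈ V`. -/
def NearlyConvexAt (V : Set E) (x : E) : Prop :=
  ∀ y ∈ V, ∃ t : ℕ → ℝ, (∀ k, 0 < t k) ∧ Tendsto t atTop (𝓝 0) ∧
    ∀ᶠ k in atTop, x + t k • (y - x) ∈ V

/-- The non-smooth linearized tangential cone `D(x)`. -/
def linTangCone {m : ℕ} (g : Fin m → E → ℝ) (x : E) : Set E :=
  {v : E | ∀ j : Fin m, g j x = 0 → ∀ η ∈ tangSubdiff (g j) x, ⟪v, η⟫ ≤ 0}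

/-- The set `M(x)` of nonnegative combinations of tangential subgradients of active
constraints. -/
def Mset {m : ℕ} (g : Fin m → E → ℝ) (x : E) : Set E :=
  {u : E | ∃ (lam : Fin m → ℝ) (η : Fin m → E),
    (∀ j, 0 ≤ lam j) ∧ (∀ j, lam j * g j x = 0) ∧
    (∀ j, η j ∈ tangSubdiff (g j) x) ∧ u = ∑ j, lam j • η j}

/-- `w = P_W(x)`: `w` is a best approximation of `x` from `W`. -/
def IsBestApprox (W : Set E) (x w : E) : Prop :=
  w ∈ W ∧ ∀ u ∈ W, ‖x - w‖ ≤ ‖x - u‖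

/-- The convex subdifferential of `h` at `x₀`. -/
def convexSubdiff (h : E → ℝ) (x₀ : E) : Set E :=
  {p : E | ∀ y : E, ⟪p, y - x₀⟫ ≤ h y - h x₀}


/-- Lemma 2.1: if `K` is closed, `C` is a nonempty closed convex set with
`C ∩ K ≠ ∅`, `x̄ ∈ K̃ := C ∩ K`, each `g j` is tangentially convex at `x̄`, and `K` is nearly
convex at `x̄`, then `T_{K̃}(x̄) ⊆ D(x̄)`. -/
theorem contingentCone_subset_linTangCone {n m : ℕ}
    (g : Fin m → EuclideanSpace ℝ (Fin n) → ℝ)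
    (K C : Set (EuclideanSpace ℝ (Fin n)))
    (hK : K = {x | ∀ j : Fin m, g j x ≤ 0}) (hKcl : IsClosed K)
    (xbar : EuclideanSpace ℝ (Fin n))
    (htc : ∀ j : Fin m, TangentiallyConvexAt (g j) xbar)
    (hCne : C.Nonempty) (hCcl : IsClosed C) (hCconv : Convex ℝ C)
    (hCK : (C ∩ K).Nonempty) (hxbar : xbar ∈ C ∩ K)
    (hnear : NearlyConvexAt K xbar) :
    contingentCone (C ∩ K) xbar ⊆ linTangCone g xbar := by
  intro v hv j hj η hη
  obtain ⟨a, w, ha, haT, hwT, hmem⟩ := hv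
  obtain ⟨hlim, hconv⟩ := htc j
  set φ := dirDeriv (g j) xbar with hφdef
  -- positive homogeneity of φ
  have hhom : ∀ (c : ℝ), 0 < c → ∀ u, φ (c • u) = c * φ u := by
    intro c hc u
    have hcomp : Tendsto (fun α : ℝ => c * α) (𝓝[>] (0:ℝ)) (𝓝[>] (0:ℝ)) := by
      refine tendsto_nhdsWithin_of_tendsto_nhds_of_eventually_within _ ?_ ?_
      · have : Tendsto (fun α : ℝ => c * α) (𝓝 (0:ℝ)) (𝓝 (c * 0)) :=
          (continuous_const.mul continuous_id).tendsto 0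
        simpa using this.mono_left nhdsWithin_le_nhds
      · filter_upwards [self_mem_nhdsWithin] with α (hα : (0:ℝ) < α)
        exact mul_pos hc hα
    have h2 := ((hlim u).comp hcomp).const_mul c
    have h3 : Tendsto (fun α : ℝ => (g j (xbar + α • (c • u)) - g j xbar) / α)
        (𝓝[>] (0:ℝ)) (𝓝 (c * φ u)) := by
      refine h2.congr' ?_
      filter_upwards [self_mem_nhdsWithin] with α (hα : (0:ℝ) < α)
      have hcα : c * α ≠ 0 := by positivity
      simp only [Function.comp]
      rw [show α • (c • u) = (c * α) • u by rw [smul_smul, mul_comm]]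
      field_simp
    exact tendsto_nhds_unique (hlim (c • u)) h3
  -- φ ≤ 0 on directions y - xbar with y ∈ K
  have hKdir : ∀ y ∈ K, φ (y - xbar) ≤ 0 := by
    intro y hy
    obtain ⟨t, htpos, htlim, htmem⟩ := hnear y hy
    have htlim' : Tendsto t atTop (𝓝[>] (0:ℝ)) :=
      tendsto_nhdsWithin_of_tendsto_nhds_of_eventually_within t htlim
        (Eventually.of_forall htpos)
    refine le_of_tendsto ((hlim (y - xbar)).comp htlim') ?_
    filter_upwards [htmem] with k hk
    have hgle : g j (xbar + t k • (y - xbar)) ≤ 0 := by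
      rw [hK] at hk; exact hk j
    simp only [Function.comp]
    rw [hj, sub_zero]
    exact div_nonpos_of_nonpos_of_nonneg hgle (htpos k).le
  -- φ is continuous (convex on univ, finite dimensional)
  have hcont : Continuous φ := by
    exact continuousOn_univ.mp (hconv.continuousOn isOpen_univ)
  -- φ (w k) ≤ 0
  have hφw : ∀ k, φ (w k) ≤ 0 := by
    intro k
    have hyK : xbar + a k • w k ∈ K := (hmem k).2
    have h1 := hKdir _ hyK
    rw [add_sub_cancel_left] at h1
    have h2 : φ (a k • w k) = a k * φ (w k) := hhom _ (ha k) _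
    nlinarith [ha k]
  have hφv : φ v ≤ 0 :=
    le_of_tendsto ((hcont.tendsto v).comp hwT) (Eventually.of_forall hφw)
  have h5 : (⟪η, v⟫ : ℝ) ≤ 0 := (hη v).trans hφv
  rwa [real_inner_comm] at h5

end
end

section
/- Let K := {x ∈ ℝⁿ : g_j(x) ≤ 0, j = 1,…,m}, where each g_j : ℝⁿ → ℝ is tangentially convex at x̄ ∈ K. If K is nearly convex at x̄ (no constraint qualification needed), then M(x̄) ⊆ (K − x̄)°, i.e., every vector u = Σ_{j=1}^m λ_j η_j with λ ∈ ℝ₊^m, λ_j g_j(x̄) = 0 and η_j ∈ ∂_T g_j(x̄) satisfies ⟨u, y − x̄⟩ ≤ 0 for all y ∈ K. -/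
open Filter Set Pointwise
open scoped Topology RealInnerProductSpace

noncomputable section

variable {E : Type*} [NormedAddCommGroup E] [InnerProductSpace ℝ E]

/-- if each `g j` is tangentially convex at `x̄ ∈ K` and `K` is nearly convex
at `x̄` (no constraint qualification needed), then `M(x̄) ⊆ (K - x̄)°`. -/
theorem Mset_subset_polar {n m : ℕ}
    (g : Fin m → EuclideanSpace ℝ (Fin n) → ℝ)
    (K : Set (EuclideanSpace ℝ (Fin n)))
    (hK : K = {x | ∀ j : Fin m, g j x ≤ 0})
    (xbar : EuclideanSpace ℝ (Fin n)) (hxbar : xbar ∈ K)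
    (htc : ∀ j : Fin m, TangentiallyConvexAt (g j) xbar)
    (hnear : NearlyConvexAt K xbar) :
    Mset g xbar ⊆ polarOf K xbar := by
  rintro u ⟨lam, η, hlam, hlg, hη, rfl⟩ y hy
  set v := y - xbar with hv
  obtain ⟨t, htpos, ht0, hmem⟩ := hnear y hy
  have key : ∀ j : Fin m, g j xbar = 0 → dirDeriv (g j) xbar v ≤ 0 := by
    intro j hact
    have htend : Tendsto (fun k => (g j (xbar + t k • v) - g j xbar) / t k) atTop
        (𝓝 (dirDeriv (g j) xbar v)) := by
      exact ((htc j).1 v).comp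
        (tendsto_nhdsWithin_of_tendsto_nhds_of_eventually_within _ ht0
          (Eventually.of_forall fun k => htpos k))
    refine le_of_tendsto htend ?_
    filter_upwards [hmem] with k hk
    have hle : g j (xbar + t k • v) ≤ 0 := by rw [hK] at hk; exact hk j
    exact div_nonpos_of_nonpos_of_nonneg (by rw [hact]; linarith) (le_of_lt (htpos k))
  have hrw : ⟪∑ j, lam j • η j, v⟫ = ∑ j, lam j * ⟪η j, v⟫ := by
    rw [sum_inner]; exact Finset.sum_congr rfl fun j _ => real_inner_smul_left _ _ _
  rw [hrw]
  apply Finset.sum_nonpos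
  intro j _
  rcases eq_or_lt_of_le (hlam j) with h0 | hpos
  · simp [← h0]
  · have hact : g j xbar = 0 := by
      rcases mul_eq_zero.mp (hlg j) with h | h
      · exact absurd h (ne_of_gt hpos)
      · exact h
    have h1 : ⟪η j, v⟫ ≤ dirDeriv (g j) xbar v := hη j v
    have h2 := key j hact
    nlinarith [hlam j]

end
end

section
/- Let K := {x ∈ ℝⁿ : g_j(x) ≤ 0, j = 1,…,m} be closed, where each g_j : ℝⁿ → ℝ is tangentially convex at x̄. Let C be a nonempty closed convex subset of ℝⁿ with C ∩ K ≠ ∅, let K̃ := C ∩ K, and let x̄ ∈ K̃. If K is nearly convex at x̄ and the non-smooth Abadie constraint qualification holds at x̄, then {C, K} has the strong CHIP at x̄, i.e., (C ∩ K − x̄)° = (C − x̄)° + (K − x̄)°. -/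
open Filter Set Pointwise
open scoped Topology RealInnerProductSpace

noncomputable section

variable {E : Type*} [NormedAddCommGroup E] [InnerProductSpace ℝ E]

/-- Corollary 3.1: under near convexity of `K` at `x̄` and the non-smooth
Abadie constraint qualification at `x̄`, the pair `{C, K}` has the strong CHIP at `x̄`:
`(C ∩ K - x̄)° = (C - x̄)° + (K - x̄)°`. -/
theorem strongCHIP_of_NACQ {n m : ℕ}
    (g : Fin m → EuclideanSpace ℝ (Fin n) → ℝ)
    (K C : Set (EuclideanSpace ℝ (Fin n)))
    (hK : K = {x | ∀ j : Fin m, g j x ≤ 0}) (hKcl : IsClosed K)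
    (xbar : EuclideanSpace ℝ (Fin n))
    (htc : ∀ j : Fin m, TangentiallyConvexAt (g j) xbar)
    (hCne : C.Nonempty) (hCcl : IsClosed C) (hCconv : Convex ℝ C)
    (hCK : (C ∩ K).Nonempty) (hxbar : xbar ∈ C ∩ K)
    (hnear : NearlyConvexAt K xbar)
    (hNACQ : linTangCone g xbar ⊆ contingentCone (C ∩ K) xbar) :
    polarOf (C ∩ K) xbar = polarOf C xbar + polarOf K xbar := by
  ext l
  simp only [Set.mem_add]
  constructor
  · intro hl
    refine ⟨0, fun y _ => by simp, l, ?_, zero_add l⟩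
    intro y hy
    set v := y - xbar with hv
    obtain ⟨t, htpos, ht0, htmem⟩ := hnear y hy
    have hvD : v ∈ linTangCone g xbar := by
      intro j hj η hη
      have hseq : Tendsto t atTop (𝓝[>] (0:ℝ)) := by
        rw [tendsto_nhdsWithin_iff]
        exact ⟨ht0, Eventually.of_forall htpos⟩
      have hquot : Tendsto (fun k => (g j (xbar + t k • v) - g j xbar) / t k)
          atTop (𝓝 (dirDeriv (g j) xbar v)) := ((htc j).1 v).comp hseq
      have hdd : dirDeriv (g j) xbar v ≤ 0 := by
        apply le_of_tendsto hquot
        filter_upwards [htmem] with k hk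
        have hgle : g j (xbar + t k • v) ≤ 0 := by
          rw [hK] at hk; exact hk j
        apply div_nonpos_of_nonpos_of_nonneg
        · linarith
        · exact (htpos k).le
      have h := hη v
      rw [real_inner_comm]
      linarith
    obtain ⟨a, w, hapos, ha0, hw, hmem⟩ := hNACQ hvD
    have hlim : Tendsto (fun k => ⟪l, w k⟫) atTop (𝓝 ⟪l, v⟫) :=
      (tendsto_const_nhds : Tendsto (fun _ : ℕ => l) atTop (𝓝 l)).inner hw
    have hle : ∀ k, ⟪l, w k⟫ ≤ 0 := by
      intro k
      have h1 := hl _ (hmem k)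
      have h2 : ⟪l, a k • w k⟫ ≤ 0 := by simpa using h1
      rw [real_inner_smul_right] at h2
      nlinarith [hapos k]
    exact le_of_tendsto hlim (Eventually.of_forall hle)
  · rintro ⟨l1, h1, l2, h2, rfl⟩ y hy
    have ha := h1 y hy.1
    have hb := h2 y hy.2
    rw [inner_add_left]
    linarith

end
end

section
/- Let K := {x ∈ ℝⁿ : g_j(x) ≤ 0, j = 1,…,m}, where each g_j : ℝⁿ → ℝ is tangentially convex at x̄. Let C be a nonempty closed convex subset of ℝⁿ with C ∩ K ≠ ∅, let K̃ := C ∩ K with K̃ closed and convex, x̄ ∈ K̃, x ∈ ℝⁿ, and assume K is nearly convex at x̄ (no constraint qualification is assumed). If there exist λ ∈ ℝ₊^m with λ_j g_j(x̄) = 0 for j = 1,…,m and η_j ∈ ∂_T g_j(x̄) (j = 1,…,m) such that 0 ∈ ∂‖· − x‖(x̄) + (C − x̄)° + Σ_{j=1}^m λ_j η_j, then x̄ = P_{K̃}(x), i.e., ‖x̄ − x‖ = inf_{y ∈ K̃} ‖y − x‖. -/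
open Filter Set Pointwise
open scoped Topology RealInnerProductSpace

noncomputable section

variable {E : Type*} [NormedAddCommGroup E] [InnerProductSpace ℝ E]

/-- Theorem 4.2, (iii) ⇒ (i): assume `K̃ := C ∩ K` is closed and convex and
`K` is nearly convex at `x̄` (no constraint qualification assumed). If
`0 ∈ ∂‖· - x‖(x̄) + (C - x̄)° + ∑ λ_j η_j` for suitable Lagrange multipliers, then
`x̄ = P_{K̃}(x)`. -/
theorem bestApprox_of_lagrange {n m : ℕ}
    (g : Fin m → EuclideanSpace ℝ (Fin n) → ℝ)
    (K C : Set (EuclideanSpace ℝ (Fin n)))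
    (hK : K = {x | ∀ j : Fin m, g j x ≤ 0})
    (xbar x : EuclideanSpace ℝ (Fin n))
    (htc : ∀ j : Fin m, TangentiallyConvexAt (g j) xbar)
    (hCne : C.Nonempty) (hCcl : IsClosed C) (hCconv : Convex ℝ C)
    (hCK : (C ∩ K).Nonempty) (hxbar : xbar ∈ C ∩ K)
    (hKtcl : IsClosed (C ∩ K)) (hKtconv : Convex ℝ (C ∩ K))
    (hnear : NearlyConvexAt K xbar)
    (hlag : ∃ (lam : Fin m → ℝ) (η : Fin m → EuclideanSpace ℝ (Fin n)),
      (∀ j, 0 ≤ lam j) ∧ (∀ j, lam j * g j xbar = 0) ∧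
      (∀ j, η j ∈ tangSubdiff (g j) xbar) ∧
      (0 : EuclideanSpace ℝ (Fin n)) ∈
        convexSubdiff (fun y => ‖y - x‖) xbar + polarOf C xbar +
          {∑ j, lam j • η j}) :
    IsBestApprox (C ∩ K) x xbar := by
  obtain ⟨lam, η, hlam0, hcomp, hη, hmem⟩ := hlag
  -- decompose the membership 0 ∈ A + B + {s}
  obtain ⟨ab, hab, sv, hsv, hsum⟩ := hmem
  obtain ⟨p, hp, q, hq, hpq⟩ := hab
  simp only [Set.mem_singleton_iff] at hsv
  subst hsv
  refine ⟨hxbar, ?_⟩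
  intro u hu
  -- key: for active j, directional derivative in direction u - xbar is ≤ 0
  have hdir : ∀ j : Fin m, lam j ≠ 0 → dirDeriv (g j) xbar (u - xbar) ≤ 0 := by
    intro j hj
    have hgj0 : g j xbar = 0 := by
      have := hcomp j
      rcases mul_eq_zero.1 this with h | h
      · exact absurd h hj
      · exact h
    obtain ⟨t, ht0, htlim, hev⟩ := hnear u hu.2
    have htend : Tendsto t atTop (𝓝[>] (0:ℝ)) := by
      rw [tendsto_nhdsWithin_iff]
      exact ⟨htlim, Filter.Eventually.of_forall fun k => ht0 k⟩
    have hq2 : Tendsto (fun k => (g j (xbar + t k • (u - xbar)) - g j xbar) / t k)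
        atTop (𝓝 (dirDeriv (g j) xbar (u - xbar))) :=
      ((htc j).1 (u - xbar)).comp htend
    refine le_of_tendsto hq2 ?_
    filter_upwards [hev] with k hk
    have hle : g j (xbar + t k • (u - xbar)) ≤ 0 := by
      rw [hK] at hk; exact hk j
    rw [hgj0]
    exact div_nonpos_of_nonpos_of_nonneg (by linarith) (ht0 k).le
  -- inner product of the sum with u - xbar is ≤ 0
  have hs : ⟪∑ j, lam j • η j, u - xbar⟫ ≤ 0 := by
    rw [sum_inner]
    refine Finset.sum_nonpos fun j _ => ?_
    rw [real_inner_smul_left]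
    rcases eq_or_ne (lam j) 0 with h | h
    · simp [h]
    · have h1 : ⟪η j, u - xbar⟫ ≤ dirDeriv (g j) xbar (u - xbar) := hη j (u - xbar)
      have h2 := hdir j h
      have := (hlam0 j)
      nlinarith
  have hqle : ⟪q, u - xbar⟫ ≤ 0 := hq u hu.1
  have hple : ⟪p, u - xbar⟫ ≤ ‖u - x‖ - ‖xbar - x‖ := hp u
  have hzero : ⟪p, u - xbar⟫ + ⟪q, u - xbar⟫ + ⟪∑ j, lam j • η j, u - xbar⟫ = 0 := by
    have : p + q + ∑ j, lam j • η j = 0 := by simp only at hpq hsum; rw [hpq]; exact hsum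
    calc ⟪p, u - xbar⟫ + ⟪q, u - xbar⟫ + ⟪∑ j, lam j • η j, u - xbar⟫
        = ⟪p + q + ∑ j, lam j • η j, u - xbar⟫ := by rw [inner_add_left, inner_add_left]
      _ = 0 := by rw [this, inner_zero_left]
  have : ‖xbar - x‖ ≤ ‖u - x‖ := by linarith
  rw [norm_sub_rev x xbar, norm_sub_rev x u]
  exact this


end
end

section
/- Define g₁, g₂, g₃ : ℝ² → ℝ by g₁(x₁,x₂) := |x₂| − x₁, g₂(x₁,x₂) := 1 − x₁² − (x₂ − 1)², g₃(x₁,x₂) := 1 − x₁² − (x₂ + 1)². Let K := {(x₁,x₂) : g_j(x₁,x₂) ≤ 0, j = 1,2,3}, C := {(x₁,x₂) ∈ ℝ² : x₁ ≥ 0}, K̃ := C ∩ K, and x̄ := (0,0). Then: each g_j is tangentially convex at x̄ with g₁(x̄) = g₂(x̄) = g₃(x̄) = 0; ∂_T g₁(x̄) = co{(−1,−1),(−1,1)}, ∂_T g₂(x̄) = {(0,2)}, ∂_T g₃(x̄) = {(0,−2)}; T_{K̃}(x̄) = D(x̄) = {(t₁,0) : t₁ ≥ 0}, so the non-smooth Abadie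 constraint qualification holds at x̄; but there is no ν ≠ 0 in ℝ² with ⟨η, ν⟩ < 0 for all η ∈ ∂_T g_j(x̄) and all j ∈ {1,2,3}, i.e., the non-smooth Robinson constraint qualification fails at x̄. -/
open Filter Set Pointwise
open scoped Topology RealInnerProductSpace

noncomputable section

variable {E : Type*} [NormedAddCommGroup E] [InnerProductSpace ℝ E]

/-- The three constraint functions of Example 2.1. -/
def exg14 : Fin 3 → EuclideanSpace ℝ (Fin 2) → ℝ :=
  ![fun x => |x 1| - x 0,
    fun x => 1 - (x 0) ^ 2 - (x 1 - 1) ^ 2,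
    fun x => 1 - (x 0) ^ 2 - (x 1 + 1) ^ 2]

/-- The constraint set of Example 2.1. -/
def exK14 : Set (EuclideanSpace ℝ (Fin 2)) := {x | ∀ j : Fin 3, exg14 j x ≤ 0}

/-- The set `C` of Example 2.1. -/
def exC14 : Set (EuclideanSpace ℝ (Fin 2)) := {x | 0 ≤ x 0}

/-- A point of `ℝ²` from its coordinates. -/
def vec2 (a b : ℝ) : EuclideanSpace ℝ (Fin 2) :=
  (WithLp.equiv 2 (Fin 2 → ℝ)).symm ![a, b]

/-! In the paper's coordinates (numbered from 1), each `g_j` has an exact expansion along rays,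
`g_j(αv) = α φ_j(v) + α² r_j(v)` for `α > 0`, with `φ₁(v) = |v₂| - v₁` and `φ₂, φ₃ = ±2 v₂`;
hence `g_j'(x̄, ·) = φ_j`, and the tangential subdifferentials are read off from the `φ_j`.
Dividing the constraints along a contingent sequence `α_k w_k` by `α_k` and letting `k → ∞`
gives `φ_j(v) ≤ 0` for every contingent direction `v`, which forces `v₂ = 0 ≤ v₁`; conversely
the nonnegative `x₁`-axis lies in `K̃`. Robinson's condition fails because `∂_T g₂(x̄)` and
`∂_T g₃(x̄)` are the opposite vectors `(0, ±2)`. -/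

def HasQuadExpansionAt (f : E → ℝ) (x : E) (φ r : E → ℝ) : Prop :=
  ∀ v : E, ∀ α : ℝ, 0 < α → f (x + α • v) - f x = α * φ v + α ^ 2 * r v

namespace HasQuadExpansionAt

variable {f φ r : E → ℝ} {x : E}

theorem tendsto (h : HasQuadExpansionAt f x φ r) (v : E) :
    Tendsto (fun α : ℝ => (f (x + α • v) - f x) / α) (𝓝[>] 0) (𝓝 (φ v)) := by
  have hlim : Tendsto (fun α : ℝ => φ v + α * r v) (𝓝[>] 0) (𝓝 (φ v)) := by
    have hcont : Continuous (fun α : ℝ => φ v + α * r v) := by fun_prop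
    simpa using (hcont.tendsto 0).mono_left nhdsWithin_le_nhds
  refine hlim.congr' ?_
  filter_upwards [self_mem_nhdsWithin] with α (hα : 0 < α)
  rw [h v α hα]
  field_simp

theorem dirDeriv_eq (h : HasQuadExpansionAt f x φ r) (v : E) : dirDeriv f x v = φ v :=
  (h.tendsto v).limUnder_eq

theorem tangentiallyConvexAt (h : HasQuadExpansionAt f x φ r) (hφ : ConvexOn ℝ univ φ) :
    TangentiallyConvexAt f x := by
  have hdd : dirDeriv f x = φ := funext h.dirDeriv_eq
  exact ⟨fun v => hdd ▸ h.tendsto v, hdd ▸ hφ⟩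

theorem tangSubdiff_eq (h : HasQuadExpansionAt f x φ r) :
    tangSubdiff f x = {p | ∀ v, ⟪p, v⟫ ≤ φ v} := by
  simp only [tangSubdiff, h.dirDeriv_eq]

theorem tangSubdiff_eq_singleton {q : E} (h : HasQuadExpansionAt f x (⟪q, ·⟫) r) :
    tangSubdiff f x = {q} := by
  rw [h.tangSubdiff_eq]
  ext p
  refine ⟨fun hp => ?_, fun hp v => by rw [mem_singleton_iff.1 hp]⟩
  have hpq : ⟪p - q, p - q⟫ ≤ 0 := by
    rw [inner_sub_left]
    linarith [hp (p - q)]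
  exact mem_singleton_iff.2 (sub_eq_zero.1 (real_inner_self_nonpos.1 hpq))

theorem nonpos_of_mem_contingentCone (h : HasQuadExpansionAt f x φ r) (hφ : Continuous φ)
    (hr : Continuous r) (hfx : f x = 0) {U : Set E} (hU : ∀ y ∈ U, f y ≤ 0) {v : E}
    (hv : v ∈ contingentCone U x) : φ v ≤ 0 := by
  obtain ⟨a, w, ha_pos, ha, hw, hmem⟩ := hv
  have hle : ∀ k, φ (w k) + a k * r (w k) ≤ 0 := by
    intro k
    have hf := hU _ (hmem k)
    rw [← sub_zero (f _), ← hfx, h (w k) (a k) (ha_pos k)] at hf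
    nlinarith [ha_pos k]
  have hlim : Tendsto (fun k => φ (w k) + a k * r (w k)) atTop (𝓝 (φ v)) := by
    simpa using ((hφ.tendsto v).comp hw).add (ha.mul ((hr.tendsto v).comp hw))
  exact le_of_tendsto' hlim hle

end HasQuadExpansionAt

theorem mem_contingentCone_of_forall_pos {U : Set E} {x v : E}
    (h : ∀ t : ℝ, 0 < t → x + t • v ∈ U) : v ∈ contingentCone U x :=
  ⟨fun k => 1 / (k + 1), fun _ => v, fun k => by positivity,
    tendsto_one_div_add_atTop_nhds_zero_nat, tendsto_const_nhds, fun k => h _ (by positivity)⟩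

@[simp]
theorem vec2_apply_zero (a b : ℝ) : vec2 a b 0 = a := rfl

@[simp]
theorem vec2_apply_one (a b : ℝ) : vec2 a b 1 = b := rfl

theorem inner_eq_fin_two (x y : EuclideanSpace ℝ (Fin 2)) : ⟪x, y⟫ = x 0 * y 0 + x 1 * y 1 := by
  simp [PiLp.inner_apply, Fin.sum_univ_two, mul_comm]

@[simp]
theorem exg14_zero_apply (x : EuclideanSpace ℝ (Fin 2)) : exg14 0 x = |x 1| - x 0 := rfl

@[simp]
theorem exg14_one_apply (x : EuclideanSpace ℝ (Fin 2)) :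
    exg14 1 x = 1 - x 0 ^ 2 - (x 1 - 1) ^ 2 := rfl

@[simp]
theorem exg14_two_apply (x : EuclideanSpace ℝ (Fin 2)) :
    exg14 2 x = 1 - x 0 ^ 2 - (x 1 + 1) ^ 2 := rfl

theorem exg14_apply_zero (j : Fin 3) : exg14 j 0 = 0 := by
  fin_cases j <;> simp

theorem exg14_zero_hasQuadExpansionAt :
    HasQuadExpansionAt (exg14 0) 0 (fun v => |v 1| - v 0) 0 := by
  intro v α hα
  simp only [exg14_zero_apply, zero_add, PiLp.smul_apply, PiLp.zero_apply, smul_eq_mul, abs_mul,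
    abs_of_pos hα, abs_zero, Pi.zero_apply]
  ring

theorem exg14_one_hasQuadExpansionAt :
    HasQuadExpansionAt (exg14 1) 0 (⟪vec2 0 2, ·⟫) (fun v => -(v 0 ^ 2 + v 1 ^ 2)) := by
  intro v α _
  simp only [exg14_one_apply, inner_eq_fin_two, zero_add, PiLp.smul_apply, PiLp.zero_apply,
    smul_eq_mul, vec2_apply_zero, vec2_apply_one]
  ring

theorem exg14_two_hasQuadExpansionAt :
    HasQuadExpansionAt (exg14 2) 0 (⟪vec2 0 (-2), ·⟫) (fun v => -(v 0 ^ 2 + v 1 ^ 2)) := by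
  intro v α _
  simp only [exg14_two_apply, inner_eq_fin_two, zero_add, PiLp.smul_apply, PiLp.zero_apply,
    smul_eq_mul, vec2_apply_zero, vec2_apply_one]
  ring

theorem convexOn_abs_apply_one_sub_apply_zero :
    ConvexOn ℝ univ (fun v : EuclideanSpace ℝ (Fin 2) => |v 1| - v 0) := by
  refine ⟨convex_univ, fun x _ y _ a b ha hb _ => ?_⟩
  simp only [PiLp.add_apply, PiLp.smul_apply, smul_eq_mul]
  have h := abs_add_le (a * x 1) (b * y 1)
  rw [abs_mul, abs_mul, abs_of_nonneg ha, abs_of_nonneg hb] at h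
  linarith

theorem tangentiallyConvexAt_exg14 (j : Fin 3) : TangentiallyConvexAt (exg14 j) 0 := by
  fin_cases j
  · exact exg14_zero_hasQuadExpansionAt.tangentiallyConvexAt
      convexOn_abs_apply_one_sub_apply_zero
  · exact exg14_one_hasQuadExpansionAt.tangentiallyConvexAt
      ((innerₛₗ ℝ (vec2 0 2)).convexOn convex_univ)
  · exact exg14_two_hasQuadExpansionAt.tangentiallyConvexAt
      ((innerₛₗ ℝ (vec2 0 (-2))).convexOn convex_univ)

theorem tangSubdiff_exg14_zero :
    tangSubdiff (exg14 0) 0 = {p : EuclideanSpace ℝ (Fin 2) | p 0 = -1 ∧ |p 1| ≤ 1} := by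
  rw [exg14_zero_hasQuadExpansionAt.tangSubdiff_eq]
  ext p
  simp only [mem_ofPred_eq, inner_eq_fin_two]
  constructor
  · intro hp
    have h₁ := hp (vec2 1 0)
    have h₂ := hp (vec2 (-1) 0)
    have h₃ := hp (vec2 0 1)
    have h₄ := hp (vec2 0 (-1))
    simp only [vec2_apply_zero, vec2_apply_one] at h₁ h₂ h₃ h₄
    norm_num at h₁ h₂ h₃ h₄
    exact ⟨by linarith, abs_le.2 ⟨by linarith, by linarith⟩⟩
  · rintro ⟨hp₀, hp₁⟩ v
    have hpv : p 1 * v 1 ≤ |v 1| := calc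
      p 1 * v 1 ≤ |p 1| * |v 1| := by rw [← abs_mul]; exact le_abs_self _
      _ ≤ |v 1| := mul_le_of_le_one_left (abs_nonneg _) hp₁
    rw [hp₀]
    linarith

theorem convexHull_vec2_pair :
    convexHull ℝ {vec2 (-1) (-1), vec2 (-1) 1} = {p | p 0 = -1 ∧ |p 1| ≤ 1} := by
  rw [convexHull_pair, segment_eq_image]
  ext p
  simp only [mem_image, mem_ofPred_eq]
  constructor
  · rintro ⟨t, ⟨ht₀, ht₁⟩, rfl⟩
    simp only [PiLp.add_apply, PiLp.smul_apply, smul_eq_mul, vec2_apply_zero, vec2_apply_one]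
    exact ⟨by ring, abs_le.2 ⟨by linarith, by linarith⟩⟩
  · rintro ⟨hp₀, hp₁⟩
    rcases abs_le.1 hp₁ with ⟨hlo, hhi⟩
    refine ⟨(1 + p 1) / 2, ⟨by linarith, by linarith⟩, ?_⟩
    ext i
    fin_cases i <;>
      simp only [Fin.zero_eta, Fin.mk_one, PiLp.add_apply, PiLp.smul_apply, smul_eq_mul,
        vec2_apply_zero, vec2_apply_one, hp₀] <;> ring

theorem linTangCone_exg14 :
    linTangCone exg14 0 = {x : EuclideanSpace ℝ (Fin 2) | 0 ≤ x 0 ∧ x 1 = 0} := by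
  have hsub₁ := exg14_one_hasQuadExpansionAt.tangSubdiff_eq_singleton
  have hsub₂ := exg14_two_hasQuadExpansionAt.tangSubdiff_eq_singleton
  ext v
  simp only [linTangCone, mem_ofPred_eq]
  constructor
  · intro hv
    have h₀ := hv 0 (exg14_apply_zero 0) (vec2 (-1) 1) (by simp [tangSubdiff_exg14_zero])
    have h₁ := hv 1 (exg14_apply_zero 1) (vec2 0 2) (by simp [hsub₁])
    have h₂ := hv 2 (exg14_apply_zero 2) (vec2 0 (-2)) (by simp [hsub₂])
    simp only [inner_eq_fin_two, vec2_apply_zero, vec2_apply_one] at h₀ h₁ h₂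
    constructor <;> linarith
  · rintro ⟨hv₀, hv₁⟩ j -
    fin_cases j <;> simp [tangSubdiff_exg14_zero, hsub₁, hsub₂, inner_eq_fin_two, hv₁]
    exact fun η hη₀ _ => by rw [hη₀]; linarith

theorem contingentCone_exC14_inter_exK14 :
    contingentCone (exC14 ∩ exK14) 0 = {x : EuclideanSpace ℝ (Fin 2) | 0 ≤ x 0 ∧ x 1 = 0} := by
  ext v
  constructor
  · intro hv
    have hcoord (i : Fin 2) : Continuous fun x : EuclideanSpace ℝ (Fin 2) => x i :=
      (EuclideanSpace.proj i).continuous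
    have hr : Continuous fun x : EuclideanSpace ℝ (Fin 2) => -(x 0 ^ 2 + x 1 ^ 2) :=
      (((hcoord 0).pow 2).add ((hcoord 1).pow 2)).neg
    have h₀ := exg14_zero_hasQuadExpansionAt.nonpos_of_mem_contingentCone
      (((hcoord 1).abs).sub (hcoord 0)) continuous_const (exg14_apply_zero 0)
      (fun y hy => hy.2 0) hv
    have h₁ := exg14_one_hasQuadExpansionAt.nonpos_of_mem_contingentCone
      (continuous_const.inner continuous_id) hr (exg14_apply_zero 1) (fun y hy => hy.2 1) hv
    have h₂ := exg14_two_hasQuadExpansionAt.nonpos_of_mem_contingentCone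
      (continuous_const.inner continuous_id) hr (exg14_apply_zero 2) (fun y hy => hy.2 2) hv
    simp only [inner_eq_fin_two, vec2_apply_zero, vec2_apply_one] at h₀ h₁ h₂
    have hv₁ : v 1 = 0 := by linarith
    exact ⟨by linarith [abs_nonneg (v 1)], hv₁⟩
  · rintro ⟨hv₀, hv₁⟩
    refine mem_contingentCone_of_forall_pos fun t ht => ⟨?_, fun j => ?_⟩
    · simp only [exC14, mem_ofPred_eq, zero_add, PiLp.smul_apply, smul_eq_mul]
      positivity
    · fin_cases j <;>
        simp only [Fin.zero_eta, Fin.mk_one, Fin.reduceFinMk, exg14_zero_apply, exg14_one_apply,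
          exg14_two_apply, zero_add, PiLp.smul_apply, smul_eq_mul, hv₁, mul_zero, abs_zero] <;>
        nlinarith [mul_nonneg ht.le hv₀]

/-- Example 2.1: at `x̄ = (0,0)`, each `g_j` is tangentially convex with
`g_j(x̄) = 0`, the tangential subdifferentials are as computed, `T_{K̃}(x̄) = D(x̄)` is the
nonnegative `x₁`-axis (so NACQ holds), but NRCQ fails at `x̄`. -/
theorem example_NACQ_without_NRCQ :
    (∀ j : Fin 3, TangentiallyConvexAt (exg14 j) 0) ∧
    (∀ j : Fin 3, exg14 j 0 = 0) ∧
    tangSubdiff (exg14 0) 0 = convexHull ℝ {vec2 (-1) (-1), vec2 (-1) 1} ∧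
    tangSubdiff (exg14 1) 0 = {vec2 0 2} ∧
    tangSubdiff (exg14 2) 0 = {vec2 0 (-2)} ∧
    contingentCone (exC14 ∩ exK14) 0 = linTangCone exg14 0 ∧
    linTangCone exg14 0 = {x : EuclideanSpace ℝ (Fin 2) | 0 ≤ x 0 ∧ x 1 = 0} ∧
    ¬ ∃ v : EuclideanSpace ℝ (Fin 2), v ≠ 0 ∧
        ∀ j : Fin 3, ∀ η ∈ tangSubdiff (exg14 j) 0, ⟪η, v⟫ < 0 := by
  have hsub₁ := exg14_one_hasQuadExpansionAt.tangSubdiff_eq_singleton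
  have hsub₂ := exg14_two_hasQuadExpansionAt.tangSubdiff_eq_singleton
  refine ⟨tangentiallyConvexAt_exg14, exg14_apply_zero,
    tangSubdiff_exg14_zero.trans convexHull_vec2_pair.symm, hsub₁, hsub₂,
    contingentCone_exC14_inter_exK14.trans linTangCone_exg14.symm, linTangCone_exg14, ?_⟩
  rintro ⟨v, -, hv⟩
  have h₁ := hv 1 (vec2 0 2) (by simp [hsub₁])
  have h₂ := hv 2 (vec2 0 (-2)) (by simp [hsub₂])
  simp only [inner_eq_fin_two, vec2_apply_zero, vec2_apply_one] at h₁ h₂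
  linarith

end
end

section
/- Define g : ℝ → ℝ by g(x) := |x| − x, so K := {x ∈ ℝ : g(x) ≤ 0} = [0, +∞). Let C := (−∞, 0], K̃ := C ∩ K = {0}, and x̄ := 0. Then: g is tangentially convex at x̄ with g'(x̄, ν) = |ν| − ν and ∂_T g(x̄) = [−2, 0]; K is nearly convex at x̄; {C, K} has the strong CHIP at x̄, namely (K̃ − x̄)° = ℝ = (C − x̄)° + (K − x̄)° with (K − x̄)° = (−∞,0] and (C − x̄)° = [0,+∞); but D(x̄) = [0,+∞) ⊄ {0} = T_{K̃}(x̄), so the non-smooth Abadie constraint qualification fails at x̄. Hence the strong CHIP at x̄ does not imply the non-smooth Abadie constraint qualification at x̄. -/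
open Filter Set Pointwise
open scoped Topology RealInnerProductSpace

noncomputable section

variable {E : Type*} [NormedAddCommGroup E] [InnerProductSpace ℝ E]

/-- The constraint function family of Example 3.1: `g(x) = |x| - x`. -/
def exg15 : Fin 1 → ℝ → ℝ := ![fun x => |x| - x]

/-- The constraint set of Example 3.1: `K = {x : |x| - x ≤ 0}`. -/
def exK15 : Set ℝ := {x | ∀ j : Fin 1, exg15 j x ≤ 0}

/-- The set `C` of Example 3.1. -/
def exC15 : Set ℝ := Set.Iic 0

/-! The constraint `g(x) = |x| - x` is positively homogeneous, so `g'(0, ·) = g` and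
`∂_T g(0) = [-g(-1), g(1)] = [-2, 0]`. The cone `D(0) = [0, ∞)` is computed from `g` alone and
only sees `K`, whereas `C ∩ K = {0}` is a point, with polar all of `ℝ` and contingent cone `{0}`.
The polars of the two half-lines `C` and `K` are opposite half-lines adding up to `ℝ`, which is
the strong CHIP; NACQ instead compares `D(0)` with the tangent cone of the intersection. -/

section PosHomogeneous

variable {f : E → ℝ}

lemma map_zero_of_posHomogeneous (hf : ∀ t : ℝ, 0 < t → ∀ v, f (t • v) = t * f v) : f 0 = 0 := by
  have h := hf 2 two_pos 0
  rw [smul_zero] at h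
  linarith

lemma tendsto_diffQuot_zero_of_posHomogeneous (hf : ∀ t : ℝ, 0 < t → ∀ v, f (t • v) = t * f v)
    (v : E) :
    Tendsto (fun α : ℝ => (f (0 + α • v) - f 0) / α) (𝓝[>] 0) (𝓝 (f v)) := by
  refine tendsto_const_nhds.congr' ?_
  filter_upwards [self_mem_nhdsWithin] with α (hα : 0 < α)
  rw [zero_add, hf α hα, map_zero_of_posHomogeneous hf, sub_zero, mul_div_cancel_left₀ _ hα.ne']

lemma dirDeriv_zero_of_posHomogeneous (hf : ∀ t : ℝ, 0 < t → ∀ v, f (t • v) = t * f v) :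
    dirDeriv f 0 = f :=
  funext fun v => (tendsto_diffQuot_zero_of_posHomogeneous hf v).limUnder_eq

lemma tangentiallyConvexAt_zero_of_posHomogeneous
    (hf : ∀ t : ℝ, 0 < t → ∀ v, f (t • v) = t * f v) (hconv : ConvexOn ℝ univ f) :
    TangentiallyConvexAt f 0 := by
  rw [TangentiallyConvexAt, dirDeriv_zero_of_posHomogeneous hf]
  exact ⟨tendsto_diffQuot_zero_of_posHomogeneous hf, hconv⟩

end PosHomogeneous

lemma tangSubdiff_zero_of_posHomogeneous_real {f : ℝ → ℝ}
    (hf : ∀ t : ℝ, 0 < t → ∀ v, f (t • v) = t * f v) :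
    tangSubdiff f 0 = Icc (-f (-1)) (f 1) := by
  ext p
  simp only [tangSubdiff, dirDeriv_zero_of_posHomogeneous hf, Real.inner_apply, mem_ofPred_eq,
    mem_Icc]
  constructor
  · intro h
    have h₁ := h 1
    have h₂ := h (-1)
    constructor <;> linarith
  · rintro ⟨hneg, hpos⟩ v
    rcases lt_trichotomy v 0 with hv | rfl | hv
    · have h := hf (-v) (neg_pos.2 hv) (-1)
      rw [smul_eq_mul, mul_neg_one, neg_neg] at h
      nlinarith
    · simp [map_zero_of_posHomogeneous hf]
    · have h := hf v hv 1
      rw [smul_eq_mul, mul_one] at h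
      nlinarith

lemma polarOf_singleton_self (x : E) : polarOf {x} x = univ := by
  ext l
  simp [polarOf]

lemma contingentCone_singleton_self (x : E) : contingentCone {x} x = {0} := by
  ext v
  simp only [contingentCone, mem_ofPred_eq, mem_singleton_iff, add_eq_left, smul_eq_zero]
  constructor
  · rintro ⟨a, w, ha, -, hw, hmem⟩
    have hw0 : w = fun _ => 0 := funext fun k => (hmem k).resolve_left (ha k).ne'
    rw [hw0] at hw
    exact tendsto_nhds_unique hw tendsto_const_nhds
  · rintro rfl
    exact ⟨fun k => 1 / (k + 1), fun _ => 0, fun k => by positivity,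
      tendsto_one_div_add_atTop_nhds_zero_nat, tendsto_const_nhds, fun _ => Or.inr rfl⟩

lemma Convex.nearlyConvexAt {V : Set E} {x : E} (hV : Convex ℝ V) (hx : x ∈ V) :
    NearlyConvexAt V x := by
  intro y hy
  refine ⟨fun k => 1 / (k + 1), fun k => by positivity, tendsto_one_div_add_atTop_nhds_zero_nat,
    Eventually.of_forall fun k => hV.add_smul_sub_mem hx hy ⟨by positivity, ?_⟩⟩
  exact div_le_one_of_le₀ (by simp) (by positivity)

lemma polarOf_Ici_self (a : ℝ) : polarOf (Ici a) a = Iic 0 := by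
  ext l
  simp only [polarOf, mem_Ici, Real.inner_apply, mem_ofPred_eq, mem_Iic]
  refine ⟨fun h => ?_, fun hl y hy => mul_nonpos_of_nonpos_of_nonneg hl (sub_nonneg.2 hy)⟩
  simpa using h (a + 1) (by linarith)

lemma polarOf_Iic_self (a : ℝ) : polarOf (Iic a) a = Ici 0 := by
  ext l
  simp only [polarOf, mem_Iic, Real.inner_apply, mem_ofPred_eq, mem_Ici]
  refine ⟨fun h => ?_, fun hl y hy => mul_nonpos_of_nonneg_of_nonpos hl (sub_nonpos.2 hy)⟩
  simpa using h (a - 1) (by linarith)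

lemma Ici_zero_add_Iic_zero : Ici (0 : ℝ) + Iic 0 = univ :=
  eq_univ_of_forall fun r =>
    ⟨max r 0, le_max_right r 0, min r 0, min_le_right r 0, (max_add_min r 0).trans (add_zero r)⟩

lemma exg15_posHomogeneous (t : ℝ) (ht : 0 < t) (v : ℝ) : exg15 0 (t • v) = t * exg15 0 v := by
  simp only [exg15, Matrix.cons_val_zero, smul_eq_mul, abs_mul, abs_of_pos ht]
  ring

lemma convexOn_exg15 : ConvexOn ℝ univ (exg15 0) :=
  (convexOn_univ_norm (E := ℝ)).sub (concaveOn_id convex_univ)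

lemma exK15_eq_Ici : exK15 = Ici 0 := by
  ext x
  simp only [exK15, exg15, Fin.forall_fin_one, Matrix.cons_val_zero, mem_ofPred_eq, mem_Ici,
    sub_nonpos]
  exact ⟨(abs_nonneg x).trans, fun hx => (abs_of_nonneg hx).le⟩

lemma tangSubdiff_exg15 : tangSubdiff (exg15 0) 0 = Icc (-2) 0 := by
  rw [tangSubdiff_zero_of_posHomogeneous_real exg15_posHomogeneous]
  norm_num [exg15]

lemma linTangCone_exg15 : linTangCone exg15 0 = Ici 0 := by
  ext v
  simp only [linTangCone, Fin.forall_fin_one, tangSubdiff_exg15, Real.inner_apply, mem_Icc,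
    mem_ofPred_eq, mem_Ici]
  refine ⟨fun h => ?_, fun hv _ η hη => mul_nonpos_of_nonneg_of_nonpos hv hη.2⟩
  have := h (by simp [exg15]) (-1) ⟨by norm_num, by norm_num⟩
  linarith

/-- Example 3.1: with `g(x) = |x| - x`, `K = [0, ∞)`, `C = (-∞, 0]` and
`x̄ = 0`, `g` is tangentially convex at `x̄` with `g'(x̄, ν) = |ν| - ν` and
`∂_T g(x̄) = [-2, 0]`, `K` is nearly convex at `x̄`, `{C, K}` has the strong CHIP at `x̄`,
but `D(x̄) = [0, ∞) ⊄ {0} = T_{K̃}(x̄)`, i.e. NACQ fails at `x̄`. -/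
theorem example_strongCHIP_without_NACQ :
    exK15 = Set.Ici 0 ∧
    TangentiallyConvexAt (exg15 0) 0 ∧
    (∀ v : ℝ, dirDeriv (exg15 0) 0 v = |v| - v) ∧
    tangSubdiff (exg15 0) 0 = Set.Icc (-2) 0 ∧
    NearlyConvexAt exK15 0 ∧
    polarOf (exC15 ∩ exK15) 0 = Set.univ ∧
    polarOf exK15 0 = Set.Iic 0 ∧
    polarOf exC15 0 = Set.Ici 0 ∧
    polarOf (exC15 ∩ exK15) 0 = polarOf exC15 0 + polarOf exK15 0 ∧
    linTangCone exg15 0 = Set.Ici 0 ∧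
    contingentCone (exC15 ∩ exK15) 0 = {0} ∧
    ¬ linTangCone exg15 0 ⊆ contingentCone (exC15 ∩ exK15) 0 := by
  have hCK : exC15 ∩ exK15 = {0} := by rw [exK15_eq_Ici, exC15, Iic_inter_Ici, Icc_self]
  have hPK : polarOf exK15 0 = Iic 0 := exK15_eq_Ici ▸ polarOf_Ici_self 0
  have hPC : polarOf exC15 0 = Ici 0 := polarOf_Iic_self 0
  refine ⟨exK15_eq_Ici,
    tangentiallyConvexAt_zero_of_posHomogeneous exg15_posHomogeneous convexOn_exg15,
    fun v => by rw [dirDeriv_zero_of_posHomogeneous exg15_posHomogeneous]; rfl,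
    tangSubdiff_exg15,
    exK15_eq_Ici ▸ (convex_Ici 0).nearlyConvexAt self_mem_Ici,
    hCK ▸ polarOf_singleton_self 0, hPK, hPC,
    by rw [hCK, polarOf_singleton_self, hPC, hPK, Ici_zero_add_Iic_zero],
    linTangCone_exg15,
    by rw [hCK, contingentCone_singleton_self], ?_⟩
  rw [linTangCone_exg15, hCK, contingentCone_singleton_self]
  exact fun h => one_ne_zero (h (zero_le_one : (0 : ℝ) ≤ 1))
end
end
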